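/- arXiv:1312.5255 — 2 statements merged into one kernel-verified Lean document; each statement's English description precedes it below -/
import Mathlib

section
/- Let w be a weight on ℝ^d satisfying the local A₁ condition M̃w(x) ≤ C₀ w(x) for every x in the support of w. Then for every 1 < p < ∞ there exists a constant C, depending only on C₀, p, and d, such that for every measurable function f with supp f ⊆ supp w one has ∫ (M̃f(x))^p w(x)^{1−p} dx ≤ C ∫ |f(x)|^p w(x)^{1−p} dx, where w^{1−p}(x) is set equal to 0 at points where w(x) = 0; that is, the centered maximal operator M̃ is bounded on L^p(w^{1−p}). -/
/-!
With `μ = w dx` and `g = |f| / w`, every centered cube average of `|f|` factors as the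
`μ`-average of `g` times `μ(Q) / |Q| ≤ M̃w(x) ≤ C₀ w(x)`, so `M̃f ≤ C₀ w · M_μ g` on the support
of `w`. Hence `∫ (M̃f)^p w^{1-p} ≤ C₀^p ∫ (M_μ g)^p dμ`, while `∫ g^p dμ = ∫ |f|^p w^{1-p}`.
It remains to bound the centered maximal operator `M_μ` on `Lᵖ(μ)` for an arbitrary measure `μ`.
Centered cubes are the closed balls of the sup metric on `ℝᵈ`, so the Besicovitch covering theorem
gives the weak-type bound `μ {M_μ g > t} ≤ N ‖g‖₁ / t` with no doubling assumption on `μ`; splitting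
`g` at height `t / 2` and the layer-cake formula upgrade it to the strong `Lᵖ` bound.
-/

open MeasureTheory Filter Set Metric
open scoped ENNReal Topology NNReal

noncomputable section

/-- The closed axis-parallel cube centered at `c` with half-edge `r` in `ℝ^d`. -/
def cube {d : ℕ} (c : EuclideanSpace ℝ (Fin d)) (r : ℝ) : Set (EuclideanSpace ℝ (Fin d)) :=
  {y | ∀ i, |y i - c i| ≤ r}

/-- The non-centered Hardy–Littlewood maximal function over axis-parallel cubes,
with values in `ℝ≥0∞`. -/
def maximal {d : ℕ} (f : EuclideanSpace ℝ (Fin d) → ℝ) (x : EuclideanSpace ℝ (Fin d)) : ℝ≥0∞ :=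
  ⨆ (c : EuclideanSpace ℝ (Fin d)) (r : ℝ) (_ : 0 < r) (_ : x ∈ cube c r),
    (∫⁻ y in cube c r, (‖f y‖₊ : ℝ≥0∞)) / volume (cube c r)

/-- The centered Hardy–Littlewood maximal function over axis-parallel cubes. -/
def cmaximal {d : ℕ} (f : EuclideanSpace ℝ (Fin d) → ℝ) (x : EuclideanSpace ℝ (Fin d)) : ℝ≥0∞ :=
  ⨆ (r : ℝ) (_ : 0 < r),
    (∫⁻ y in cube x r, (‖f y‖₊ : ℝ≥0∞)) / volume (cube x r)

section CenteredMaximal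

variable {α : Type*} [MetricSpace α] [MeasurableSpace α]

def centeredMaximal (μ : Measure α) (g : α → ℝ≥0∞) (x : α) : ℝ≥0∞ :=
  ⨆ (r : ℝ) (_ : 0 < r), (∫⁻ y in closedBall x r, g y ∂μ) / μ (closedBall x r)

variable {μ : Measure α} {g h : α → ℝ≥0∞}

theorem centeredMaximal_mono (hgh : g ≤ h) : centeredMaximal μ g ≤ centeredMaximal μ h :=
  fun _ => iSup₂_mono fun _ _ => ENNReal.div_le_div_right (lintegral_mono fun y => hgh y) _

theorem centeredMaximal_add_const_le (g : α → ℝ≥0∞) (c : ℝ≥0∞) (x : α) :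
    centeredMaximal μ (fun y => g y + c) x ≤ centeredMaximal μ g x + c := by
  refine iSup₂_le fun r hr => ?_
  rw [lintegral_add_right _ measurable_const, setLIntegral_const, ENNReal.add_div, mul_div_assoc]
  exact add_le_add (le_iSup₂_of_le r hr le_rfl) (mul_le_of_le_one_right' ENNReal.div_self_le_one)

theorem centeredMaximal_congr_ae (hgh : g =ᵐ[μ] h) : centeredMaximal μ g = centeredMaximal μ h := by
  funext x
  simp only [centeredMaximal, lintegral_congr_ae (ae_restrict_of_ae hgh)]

theorem exists_mul_measure_closedBall_lt_of_lt_centeredMaximal {t : ℝ≥0∞} {x : α}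
    (ht0 : t ≠ 0) (htop : t ≠ ∞) (hlt : t < centeredMaximal μ g x) :
    ∃ r, 0 < r ∧ t * μ (closedBall x r) < ∫⁻ y in closedBall x r, g y ∂μ := by
  simp only [centeredMaximal, lt_iSup_iff] at hlt
  obtain ⟨r, hr, hlt⟩ := hlt
  exact ⟨r, hr, (ENNReal.lt_div_iff_mul_lt (Or.inr htop) (Or.inr ht0)).1 hlt⟩

end CenteredMaximal

section LayerCake

variable {α : Type*} [MeasurableSpace α]

theorem lintegral_rpow_le_lintegral_meas_lt_mul (μ : Measure α) (F : α → ℝ≥0∞) {p : ℝ}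
    (hp : 0 < p) :
    ∫⁻ a, F a ^ p ∂μ ≤ ENNReal.ofReal p *
      ∫⁻ t in Ioi 0, μ {a | ENNReal.ofReal t < F a} * ENNReal.ofReal (t ^ (p - 1)) := by
  obtain ⟨G, hGm, hGF, hG⟩ := exists_measurable_le_lintegral_eq μ fun a => F a ^ p
  set H : α → ℝ≥0∞ := fun a => G a ^ p⁻¹
  have hHF : ∀ a, H a ≤ F a := fun a => by
    simpa [H, ENNReal.rpow_rpow_inv hp.ne'] using
      ENNReal.rpow_le_rpow (hGF a) (inv_nonneg.2 hp.le)
  -- truncate `H` at height `n` to apply the real-valued layer cake formula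
  have hG_iSup : ∀ a, G a = ⨆ n : ℕ, min (H a) n ^ p := fun a =>
    calc G a = (⨆ n : ℕ, min (H a) n) ^ p := by
          rw [← inf_iSup_eq, ENNReal.iSup_natCast, inf_top_eq, ENNReal.rpow_inv_rpow hp.ne']
      _ = ⨆ n : ℕ, min (H a) n ^ p := (ENNReal.orderIsoRpow p hp).map_iSup _
  rw [hG, lintegral_congr hG_iSup, lintegral_iSup (f := fun n a => min (H a) n ^ p)
    (fun n => by fun_prop)
    fun m n hmn a => ENNReal.rpow_le_rpow (min_le_min le_rfl (Nat.cast_le.2 hmn)) hp.le]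
  refine iSup_le fun n => ?_
  have hfin : ∀ a, min (H a) n ≠ ∞ := fun a => (min_lt_of_right_lt (ENNReal.natCast_lt_top n)).ne
  calc ∫⁻ a, min (H a) n ^ p ∂μ = ∫⁻ a, ENNReal.ofReal ((min (H a) n).toReal ^ p) ∂μ := by
        refine lintegral_congr fun a => ?_
        rw [← ENNReal.ofReal_rpow_of_nonneg ENNReal.toReal_nonneg hp.le,
          ENNReal.ofReal_toReal (hfin a)]
    _ = ENNReal.ofReal p * ∫⁻ t in Ioi 0,
          μ {a | t < (min (H a) n).toReal} * ENNReal.ofReal (t ^ (p - 1)) :=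
        lintegral_rpow_eq_lintegral_meas_lt_mul μ (ae_of_all _ fun _ => ENNReal.toReal_nonneg)
          (by fun_prop) hp
    _ ≤ _ := by
        gcongr ENNReal.ofReal p * ?_
        refine setLIntegral_mono' measurableSet_Ioi fun t ht => ?_
        refine mul_le_mul_left (measure_mono fun a ha => ?_) _
        exact ((ENNReal.ofReal_lt_iff_lt_toReal (le_of_lt ht) (hfin a)).2 ha).trans_le
          ((min_le_left _ _).trans (hHF a))

end LayerCake

theorem lintegral_Ioo_rpow {b q : ℝ} (hb : 0 ≤ b) (hq : -1 < q) :
    ∫⁻ t in Ioo 0 b, ENNReal.ofReal (t ^ q) = ENNReal.ofReal (b ^ (q + 1) / (q + 1)) := by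
  have hint : IntegrableOn (fun t : ℝ => t ^ q) (Ioo 0 b) :=
    (intervalIntegral.intervalIntegrable_rpow' hq).1.mono_set Ioo_subset_Ioc_self
  rw [← ofReal_integral_eq_lintegral_ofReal hint
      ((ae_restrict_iff' measurableSet_Ioo).2 (ae_of_all _ fun t ht => Real.rpow_nonneg ht.1.le q)),
    ← integral_Ioc_eq_integral_Ioo, ← intervalIntegral.integral_of_le hb,
    integral_rpow (.inl hq), Real.zero_rpow (by linarith), sub_zero]

theorem lintegral_Ioi_ite_mul_rpow_le (a : ℝ≥0∞) {p : ℝ} (hp : 1 < p) :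
    ∫⁻ t in Ioi 0, (if ENNReal.ofReal t < 2 * a then a else 0) * ENNReal.ofReal (t ^ (p - 2))
      ≤ ENNReal.ofReal (2 ^ (p - 1) / (p - 1)) * a ^ p := by
  rcases eq_or_ne a 0 with rfl | ha0
  · simp
  rcases eq_or_ne a ∞ with rfl | hatop
  · rw [ENNReal.top_rpow_of_pos (by linarith),
      ENNReal.mul_top (ENNReal.ofReal_pos.2 (by bound)).ne']
    exact le_top
  set A := (2 * a).toReal
  have h2a : 2 * a ≠ ∞ := ENNReal.mul_ne_top ENNReal.ofNat_ne_top hatop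
  have hA : 0 < A := ENNReal.toReal_pos (by simp [ha0]) h2a
  have hite : ∀ t ∈ Ioi (0 : ℝ),
      (if ENNReal.ofReal t < 2 * a then a else 0) * ENNReal.ofReal (t ^ (p - 2))
        = (Iio A).indicator (fun t => a * ENNReal.ofReal (t ^ (p - 2))) t := fun t ht => by
    simp only [indicator_apply, mem_Iio, ENNReal.ofReal_lt_iff_lt_toReal (le_of_lt ht) h2a, A]
    split_ifs <;> simp
  have hApow : ENNReal.ofReal (A ^ (p - 1)) = 2 ^ (p - 1) * a ^ (p - 1) := by
    rw [← ENNReal.ofReal_rpow_of_nonneg ENNReal.toReal_nonneg (by linarith),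
      ENNReal.ofReal_toReal h2a, ENNReal.mul_rpow_of_nonneg _ _ (by linarith)]
  refine le_of_eq ?_
  rw [setLIntegral_congr_fun measurableSet_Ioi hite, lintegral_indicator measurableSet_Iio,
    Measure.restrict_restrict measurableSet_Iio, Iio_inter_Ioi, lintegral_const_mul' _ _ hatop,
    lintegral_Ioo_rpow hA.le (by linarith), show p - 2 + 1 = p - 1 by ring,
    div_eq_mul_inv, ENNReal.ofReal_mul (by positivity), hApow, div_eq_mul_inv,
    ENNReal.ofReal_mul (by positivity), ← ENNReal.ofReal_rpow_of_nonneg zero_le_two (by linarith),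
    ENNReal.ofReal_ofNat]
  calc a * (2 ^ (p - 1) * a ^ (p - 1) * ENNReal.ofReal (p - 1)⁻¹)
      = 2 ^ (p - 1) * ENNReal.ofReal (p - 1)⁻¹ * (a ^ (1 : ℝ) * a ^ (p - 1)) := by
        rw [ENNReal.rpow_one]; ring
    _ = _ := by rw [← ENNReal.rpow_add _ _ ha0 hatop, add_sub_cancel]

section Besicovitch

variable {α : Type*} [MetricSpace α] [MeasurableSpace α] [OpensMeasurableSpace α]
  [TopologicalSpace.SeparableSpace α] {N : ℕ} {τ : ℝ}

theorem measure_le_of_forall_exists_closedBall (hτ : 1 < τ)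
    (hN : IsEmpty (Besicovitch.SatelliteConfig α N τ)) (μ : Measure α) (g : α → ℝ≥0∞)
    {t : ℝ≥0∞} (ht0 : t ≠ 0) (htop : t ≠ ∞) {s : Set α} {R : ℝ}
    (h : ∀ x ∈ s, ∃ r, 0 < r ∧ r ≤ R ∧
      t * μ (closedBall x r) ≤ ∫⁻ y in closedBall x r, g y ∂μ) :
    μ s ≤ N * (∫⁻ y, g y ∂μ) / t := by
  choose! ρ hρ0 hρR hρ using h
  let q : Besicovitch.BallPackage s α :=
    { c := (↑), r := fun x => ρ x, rpos := fun x => hρ0 x x.2, r_bound := R,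
      r_le := fun x => hρR x x.2 }
  obtain ⟨U, hU, hcover⟩ := Besicovitch.exist_disjoint_covering_families hτ hN q
  have hfamily : ∀ i, μ (⋃ j ∈ U i, closedBall (j : α) (ρ j)) ≤ (∫⁻ y, g y ∂μ) / t := by
    intro i
    have hc : (U i).Countable := (hU i).countable_of_nonempty_interior fun j _ =>
      (nonempty_ball.2 (hρ0 j j.2)).mono ball_subset_interior_closedBall
    calc μ (⋃ j ∈ U i, closedBall (j : α) (ρ j))
        ≤ ∑' j : U i, μ (closedBall (j : α) (ρ j)) := measure_biUnion_le μ hc _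
      _ ≤ ∑' j : U i, (∫⁻ y in closedBall (j : α) (ρ j), g y ∂μ) / t :=
          ENNReal.tsum_le_tsum fun j => (ENNReal.le_div_iff_mul_le (.inl ht0) (.inl htop)).2 <|
            (mul_comm _ _).le.trans (hρ _ j.1.2)
      _ = (∫⁻ y in ⋃ j ∈ U i, closedBall (j : α) (ρ j), g y ∂μ) / t := by
          rw [lintegral_biUnion hc (fun _ _ => measurableSet_closedBall) (hU i)]
          simp only [div_eq_mul_inv, ENNReal.tsum_mul_right]
          rfl
      _ ≤ (∫⁻ y, g y ∂μ) / t := ENNReal.div_le_div_right (setLIntegral_le_lintegral _ _) _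
  calc μ s ≤ μ (⋃ i, ⋃ j ∈ U i, closedBall (j : α) (ρ j)) := by
        refine measure_mono fun x hx => ?_
        have := hcover ⟨⟨x, hx⟩, rfl⟩
        simp only [mem_iUnion] at this ⊢
        obtain ⟨i, j, hj, hxj⟩ := this
        exact ⟨i, j, hj, ball_subset_closedBall hxj⟩
    _ ≤ ∑ i, μ (⋃ j ∈ U i, closedBall (j : α) (ρ j)) := measure_iUnion_fintype_le _ _
    _ ≤ ∑ _i : Fin N, (∫⁻ y, g y ∂μ) / t := Finset.sum_le_sum fun i _ => hfamily i
    _ = N * (∫⁻ y, g y ∂μ) / t := by simp [mul_div_assoc]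

theorem measure_lt_centeredMaximal_le (hτ : 1 < τ)
    (hN : IsEmpty (Besicovitch.SatelliteConfig α N τ)) (μ : Measure α) (g : α → ℝ≥0∞)
    {t : ℝ≥0∞} (ht0 : t ≠ 0) :
    μ {x | t < centeredMaximal μ g x} ≤ N * (∫⁻ y, g y ∂μ) / t := by
  rcases eq_or_ne t ∞ with rfl | htop
  · simp
  -- Besicovitch ball packages need a uniform bound on the radii.
  let S : ℕ → Set α := fun R =>
    {x | ∃ r : ℝ, 0 < r ∧ r ≤ R ∧ t * μ (closedBall x r) < ∫⁻ y in closedBall x r, g y ∂μ}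
  have hS : Monotone S := fun a b hab x ⟨r, hr0, hrR, hr⟩ =>
    ⟨r, hr0, hrR.trans (Nat.cast_le.2 hab), hr⟩
  have hsub : {x | t < centeredMaximal μ g x} ⊆ ⋃ R, S R := fun x hx => by
    obtain ⟨r, hr0, hr⟩ := exists_mul_measure_closedBall_lt_of_lt_centeredMaximal ht0 htop hx
    obtain ⟨R, hR⟩ := exists_nat_ge r
    exact mem_iUnion.2 ⟨R, show x ∈ S R from ⟨r, hr0, hR, hr⟩⟩
  calc μ {x | t < centeredMaximal μ g x} ≤ μ (⋃ R, S R) := measure_mono hsub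
    _ = ⨆ R, μ (S R) := hS.measure_iUnion
    _ ≤ N * (∫⁻ y, g y ∂μ) / t := iSup_le fun R =>
        measure_le_of_forall_exists_closedBall hτ hN μ g ht0 htop (s := S R) (R := R)
          fun _ ⟨r, hr0, hrR, hr⟩ => ⟨r, hr0, hrR, hr.le⟩

theorem measure_lt_centeredMaximal_le_indicator (hτ : 1 < τ)
    (hN : IsEmpty (Besicovitch.SatelliteConfig α N τ)) (μ : Measure α) (g : α → ℝ≥0∞)
    {t : ℝ≥0∞} (ht0 : t ≠ 0) (htop : t ≠ ∞) :
    μ {x | t < centeredMaximal μ g x}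
      ≤ 2 * N * (∫⁻ y, {y | t < 2 * g y}.indicator g y ∂μ) / t := by
  set g₁ := {y | t < 2 * g y}.indicator g
  have hsplit : g ≤ fun y => g₁ y + t / 2 := fun y => by
    show g y ≤ g₁ y + t / 2
    by_cases hy : t < 2 * g y
    · simp [g₁, hy]
    · rw [show g₁ y = 0 from indicator_of_notMem (s := {y | t < 2 * g y}) hy _, zero_add]
      rw [ENNReal.le_div_iff_mul_le (.inl two_ne_zero) (.inl ENNReal.ofNat_ne_top), mul_comm]
      exact not_lt.1 hy
  have hhalf : t / 2 ≠ ∞ := ENNReal.div_ne_top htop two_ne_zero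
  have hsub : {x | t < centeredMaximal μ g x} ⊆ {x | t / 2 < centeredMaximal μ g₁ x} :=
    fun x hx => by
      refine (ENNReal.add_lt_add_iff_right hhalf).1 ?_
      rw [ENNReal.add_halves]
      exact hx.trans_le ((centeredMaximal_mono hsplit x).trans (centeredMaximal_add_const_le _ _ _))
  calc μ {x | t < centeredMaximal μ g x} ≤ μ {x | t / 2 < centeredMaximal μ g₁ x} :=
        measure_mono hsub
    _ ≤ N * (∫⁻ y, g₁ y ∂μ) / (t / 2) :=
        measure_lt_centeredMaximal_le hτ hN μ g₁ (ENNReal.div_ne_zero.2 ⟨ht0, by simp⟩)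
    _ = 2 * N * (∫⁻ y, g₁ y ∂μ) / t := by
        rw [div_eq_mul_inv, ENNReal.inv_div (.inl ENNReal.ofNat_ne_top) (.inl two_ne_zero),
          div_eq_mul_inv, div_eq_mul_inv]
        ring

theorem measure_lt_centeredMaximal_mul_rpow_le (hτ : 1 < τ)
    (hN : IsEmpty (Besicovitch.SatelliteConfig α N τ)) (μ : Measure α) (g : α → ℝ≥0∞)
    {p t : ℝ} (ht : 0 < t) :
    μ {x | ENNReal.ofReal t < centeredMaximal μ g x} * ENNReal.ofReal (t ^ (p - 1))
      ≤ 2 * N * ∫⁻ x, (if ENNReal.ofReal t < 2 * g x then g x else 0)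
          * ENNReal.ofReal (t ^ (p - 2)) ∂μ := by
  set I := ∫⁻ x, {x | ENNReal.ofReal t < 2 * g x}.indicator g x ∂μ
  have ht0 : ENNReal.ofReal t ≠ 0 := (ENNReal.ofReal_pos.2 ht).ne'
  have hpow : ENNReal.ofReal (t ^ (p - 1)) = ENNReal.ofReal (t ^ (p - 2)) * ENNReal.ofReal t := by
    rw [← ENNReal.ofReal_mul (Real.rpow_nonneg ht.le _), ← Real.rpow_add_one ht.ne']
    ring_nf
  calc μ {x | ENNReal.ofReal t < centeredMaximal μ g x} * ENNReal.ofReal (t ^ (p - 1))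
      ≤ 2 * N * I / ENNReal.ofReal t * (ENNReal.ofReal (t ^ (p - 2)) * ENNReal.ofReal t) := by
        rw [hpow]
        gcongr
        exact measure_lt_centeredMaximal_le_indicator hτ hN μ g ht0 ENNReal.ofReal_ne_top
    _ = 2 * N * (I * ENNReal.ofReal (t ^ (p - 2))) * ((ENNReal.ofReal t)⁻¹ * ENNReal.ofReal t) := by
        rw [div_eq_mul_inv]; ring
    _ = _ := by
        rw [ENNReal.inv_mul_cancel ht0 ENNReal.ofReal_ne_top, mul_one,
          ← lintegral_mul_const' _ _ ENNReal.ofReal_ne_top]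
        simp [indicator_apply]

theorem lintegral_centeredMaximal_rpow_le (hτ : 1 < τ)
    (hN : IsEmpty (Besicovitch.SatelliteConfig α N τ)) (μ : Measure α) [SFinite μ]
    {g : α → ℝ≥0∞} (hg : AEMeasurable g μ) {p : ℝ} (hp : 1 < p) :
    ∫⁻ x, centeredMaximal μ g x ^ p ∂μ
      ≤ ENNReal.ofReal (2 ^ p * p / (p - 1) * N) * ∫⁻ x, g x ^ p ∂μ := by
  -- Tonelli below needs a measurable `g`; `centeredMaximal μ g` only sees `g` up to null sets.
  wlog hgm : Measurable g generalizing g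
  · have hgp : ∫⁻ x, g x ^ p ∂μ = ∫⁻ x, hg.mk g x ^ p ∂μ :=
      lintegral_congr_ae (hg.ae_eq_mk.mono fun x hx => congrArg (· ^ p) hx)
    rw [centeredMaximal_congr_ae hg.ae_eq_mk, hgp]
    exact this hg.measurable_mk.aemeasurable hg.measurable_mk
  set Φ : ℝ → α → ℝ≥0∞ := fun t x =>
    (if ENNReal.ofReal t < 2 * g x then g x else 0) * ENNReal.ofReal (t ^ (p - 2))
  have hΦ : Measurable (Function.uncurry Φ) :=
    (Measurable.ite (measurableSet_lt (ENNReal.measurable_ofReal.comp measurable_fst)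
        ((hgm.comp measurable_snd).const_mul 2)) (hgm.comp measurable_snd) measurable_const).mul
      (measurable_fst.pow_const _).ennreal_ofReal
  have h2N : (2 * N : ℝ≥0∞) ≠ ∞ :=
    ENNReal.mul_ne_top ENNReal.ofNat_ne_top (ENNReal.natCast_ne_top N)
  have hconst : ENNReal.ofReal (2 ^ p * p / (p - 1) * N)
      = ENNReal.ofReal p * (2 * N * ENNReal.ofReal (2 ^ (p - 1) / (p - 1))) := by
    rw [← ENNReal.ofReal_natCast, ← ENNReal.ofReal_ofNat 2, ← ENNReal.ofReal_mul zero_le_two,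
      ← ENNReal.ofReal_mul (by positivity), ← ENNReal.ofReal_mul (by linarith),
      show p = 1 + (p - 1) by ring, Real.rpow_add zero_lt_two, Real.rpow_one]
    ring_nf
  calc ∫⁻ x, centeredMaximal μ g x ^ p ∂μ
      ≤ ENNReal.ofReal p * ∫⁻ t in Ioi 0,
          μ {x | ENNReal.ofReal t < centeredMaximal μ g x} * ENNReal.ofReal (t ^ (p - 1)) :=
        lintegral_rpow_le_lintegral_meas_lt_mul μ _ (by linarith)
    _ ≤ ENNReal.ofReal p * ∫⁻ t in Ioi 0, 2 * N * ∫⁻ x, Φ t x ∂μ := by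
        gcongr ENNReal.ofReal p * ?_
        exact setLIntegral_mono' measurableSet_Ioi fun t ht =>
          measure_lt_centeredMaximal_mul_rpow_le hτ hN μ g ht
    _ = ENNReal.ofReal p * (2 * N * ∫⁻ x, (∫⁻ t in Ioi 0, Φ t x) ∂μ) := by
        rw [lintegral_const_mul' _ _ h2N, lintegral_lintegral_swap hΦ.aemeasurable]
    _ ≤ ENNReal.ofReal p
          * (2 * N * ∫⁻ x, ENNReal.ofReal (2 ^ (p - 1) / (p - 1)) * g x ^ p ∂μ) := by
        gcongr with x
        exact lintegral_Ioi_ite_mul_rpow_le (g x) hp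
    _ = ENNReal.ofReal (2 ^ p * p / (p - 1) * N) * ∫⁻ x, g x ^ p ∂μ := by
        rw [lintegral_const_mul' _ _ ENNReal.ofReal_ne_top, hconst]
        ring

end Besicovitch

namespace ENNReal

theorem ofReal_mul_enorm_div_ofReal {a b : ℝ} (hb : 0 ≤ b) (hab : b = 0 → a = 0) :
    ENNReal.ofReal b * (‖a‖ₑ / ENNReal.ofReal b) = ‖a‖ₑ := by
  rcases hb.eq_or_lt with rfl | hb
  · simp [hab rfl]
  · exact ENNReal.mul_div_cancel (ofReal_pos.2 hb).ne' ofReal_ne_top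

theorem ofReal_mul_enorm_div_ofReal_rpow {a b p : ℝ} (hb : 0 ≤ b) (hab : b = 0 → a = 0)
    (hp : 0 < p) :
    ENNReal.ofReal b * (‖a‖ₑ / ENNReal.ofReal b) ^ p = ‖a‖ₑ ^ p * ENNReal.ofReal (b ^ (1 - p)) := by
  rcases hb.eq_or_lt with rfl | hb
  · simp [hab rfl, hp]
  have hb0 : ENNReal.ofReal b ≠ 0 := (ofReal_pos.2 hb).ne'
  rw [← ofReal_rpow_of_pos hb, div_rpow_of_nonneg _ _ hp.le, rpow_sub _ _ hb0 ofReal_ne_top,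
    rpow_one, div_eq_mul_inv, div_eq_mul_inv]
  ring

theorem rpow_mul_ofReal_rpow_one_sub_le {m M : ℝ≥0∞} {b c p : ℝ} (hb : 0 < b) (hc : 0 ≤ c)
    (hp : 0 < p) (h : m ≤ ENNReal.ofReal c * ENNReal.ofReal b * M) :
    m ^ p * ENNReal.ofReal (b ^ (1 - p))
      ≤ ENNReal.ofReal (c ^ p) * (ENNReal.ofReal b * M ^ p) := by
  calc m ^ p * ENNReal.ofReal (b ^ (1 - p))
      ≤ (ENNReal.ofReal c * ENNReal.ofReal b * M) ^ p * ENNReal.ofReal b ^ (1 - p) := by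
        rw [ofReal_rpow_of_pos hb]
        gcongr
    _ = ENNReal.ofReal (c ^ p) * (ENNReal.ofReal b ^ p * ENNReal.ofReal b ^ (1 - p)) * M ^ p := by
        rw [mul_rpow_of_nonneg _ _ hp.le, mul_rpow_of_nonneg _ _ hp.le,
          ofReal_rpow_of_nonneg hc hp.le]
        ring
    _ = ENNReal.ofReal (c ^ p) * (ENNReal.ofReal b * M ^ p) := by
        rw [← rpow_add _ _ (ofReal_pos.2 hb).ne' ofReal_ne_top, add_sub_cancel, rpow_one, mul_assoc]

end ENNReal

section Weighted

variable {α : Type*} [MetricSpace α] [MeasurableSpace α] [OpensMeasurableSpace α]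

theorem centeredMaximal_mul_le {ν : Measure α} (hν : ∀ x r, ν (closedBall x r) ≠ ∞)
    {W : α → ℝ≥0∞} (hW : AEMeasurable W ν) (hW_fin : ∀ᵐ y ∂ν, W y < ∞) (G : α → ℝ≥0∞) {x : α}
    (hx : centeredMaximal ν W x ≠ ∞) :
    centeredMaximal ν (fun y => W y * G y) x
      ≤ centeredMaximal ν W x * centeredMaximal (ν.withDensity W) G x := by
  refine iSup₂_le fun r hr => ?_
  set μ := ν.withDensity W
  have hB : MeasurableSet (closedBall x r) := measurableSet_closedBall
  have hint : ∫⁻ y in closedBall x r, W y * G y ∂ν = ∫⁻ y in closedBall x r, G y ∂μ :=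
    (setLIntegral_withDensity_eq_setLIntegral_mul_non_measurable₀ ν hW.restrict G hB
      (ae_restrict_of_ae hW_fin)).symm
  have hratio : μ (closedBall x r) / ν (closedBall x r) ≤ centeredMaximal ν W x :=
    le_iSup₂_of_le r hr (by rw [withDensity_apply _ hB])
  rw [hint]
  rcases eq_or_ne (μ (closedBall x r)) 0 with h0 | h0
  · simp [Measure.restrict_eq_zero.2 h0]
  have hfin : μ (closedBall x r) ≠ ∞ := fun htop =>
    hx (top_unique (by rwa [htop, ENNReal.top_div_of_ne_top (hν x r)] at hratio))
  calc (∫⁻ y in closedBall x r, G y ∂μ) / ν (closedBall x r)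
      = (∫⁻ y in closedBall x r, G y ∂μ) / μ (closedBall x r)
          * (μ (closedBall x r) / ν (closedBall x r)) := by
        rw [div_eq_mul_inv, div_eq_mul_inv, div_eq_mul_inv, mul_assoc,
          ← mul_assoc (μ (closedBall x r))⁻¹, ENNReal.inv_mul_cancel h0 hfin, one_mul]
    _ ≤ centeredMaximal μ G x * centeredMaximal ν W x :=
        mul_le_mul' (le_iSup₂_of_le r hr le_rfl) hratio
    _ = _ := mul_comm _ _

theorem centeredMaximal_enorm_le_of_A1 {ν : Measure α} (hν : ∀ x r, ν (closedBall x r) ≠ ∞)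
    {w f : α → ℝ} (hw0 : 0 ≤ w) (hw : AEMeasurable w ν)
    (hfw : Function.support f ⊆ Function.support w) {C₀ : ℝ} (hC₀ : 0 ≤ C₀) {x : α}
    (hA1x : centeredMaximal ν (fun y => ENNReal.ofReal (w y)) x ≤ ENNReal.ofReal (C₀ * w x)) :
    centeredMaximal ν (fun y => ‖f y‖ₑ) x
      ≤ ENNReal.ofReal C₀ * ENNReal.ofReal (w x) *
        centeredMaximal (ν.withDensity fun y => ENNReal.ofReal (w y))
          (fun y => ‖f y‖ₑ / ENNReal.ofReal (w y)) x := by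
  have hfg : (fun y => ‖f y‖ₑ) = fun y => ENNReal.ofReal (w y) * (‖f y‖ₑ / ENNReal.ofReal (w y)) :=
    funext fun y => (ENNReal.ofReal_mul_enorm_div_ofReal (hw0 y)
      fun hy => Function.notMem_support.1 fun h => hfw h hy).symm
  rw [hfg, ← ENNReal.ofReal_mul hC₀]
  exact (centeredMaximal_mul_le hν hw.ennreal_ofReal (ae_of_all _ fun _ => ENNReal.ofReal_lt_top)
    _ (ne_top_of_le_ne_top ENNReal.ofReal_ne_top hA1x)).trans (mul_le_mul_left hA1x _)

variable [TopologicalSpace.SeparableSpace α] {N : ℕ} {τ : ℝ}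

theorem lintegral_centeredMaximal_rpow_mul_rpow_le (hτ : 1 < τ)
    (hN : IsEmpty (Besicovitch.SatelliteConfig α N τ)) (ν : Measure α) [SFinite ν]
    (hν : ∀ x r, ν (closedBall x r) ≠ ∞) {w : α → ℝ} (hw0 : 0 ≤ w) (hw : AEMeasurable w ν)
    {C₀ : ℝ} (hC₀ : 0 ≤ C₀)
    (hA1 : ∀ x ∈ Function.support w,
      centeredMaximal ν (fun y => ENNReal.ofReal (w y)) x ≤ ENNReal.ofReal (C₀ * w x))
    {p : ℝ} (hp : 1 < p) {f : α → ℝ} (hf : AEMeasurable f ν)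
    (hfw : Function.support f ⊆ Function.support w) :
    ∫⁻ x, centeredMaximal ν (fun y => ‖f y‖ₑ) x ^ p * ENNReal.ofReal (w x ^ (1 - p)) ∂ν
      ≤ ENNReal.ofReal (C₀ ^ p * (2 ^ p * p / (p - 1) * N))
        * ∫⁻ x, ‖f x‖ₑ ^ p * ENNReal.ofReal (w x ^ (1 - p)) ∂ν := by
  set W : α → ℝ≥0∞ := fun y => ENNReal.ofReal (w y)
  set μ := ν.withDensity W
  set g : α → ℝ≥0∞ := fun y => ‖f y‖ₑ / W y
  have hp0 : 0 < p := by linarith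
  have hW : AEMeasurable W ν := hw.ennreal_ofReal
  have hW_fin : ∀ᵐ y ∂ν, W y < ∞ := ae_of_all _ fun _ => ENNReal.ofReal_lt_top
  have hg : AEMeasurable g μ := (hf.enorm.div hW).mono_ac (withDensity_absolutelyContinuous _ _)
  have hpoint : ∀ x, centeredMaximal ν (fun y => ‖f y‖ₑ) x ^ p * ENNReal.ofReal (w x ^ (1 - p))
      ≤ ENNReal.ofReal (C₀ ^ p) * (W x * centeredMaximal μ g x ^ p) := fun x => by
    rcases (hw0 x).eq_or_lt with h0 | hpos
    · simp [← h0, Real.zero_rpow (show 1 - p ≠ 0 by linarith)]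
    exact ENNReal.rpow_mul_ofReal_rpow_one_sub_le hpos hC₀ hp0
      (centeredMaximal_enorm_le_of_A1 hν hw0 hw hfw hC₀ (hA1 x hpos.ne'))
  have hright : ∀ x, W x * g x ^ p = ‖f x‖ₑ ^ p * ENNReal.ofReal (w x ^ (1 - p)) := fun x =>
    ENNReal.ofReal_mul_enorm_div_ofReal_rpow (hw0 x)
      (fun hx => Function.notMem_support.1 fun h => hfw h hx) hp0
  calc ∫⁻ x, centeredMaximal ν (fun y => ‖f y‖ₑ) x ^ p * ENNReal.ofReal (w x ^ (1 - p)) ∂ν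
      ≤ ∫⁻ x, ENNReal.ofReal (C₀ ^ p) * (W x * centeredMaximal μ g x ^ p) ∂ν :=
        lintegral_mono hpoint
    _ = ENNReal.ofReal (C₀ ^ p) * ∫⁻ x, centeredMaximal μ g x ^ p ∂μ := by
        rw [lintegral_const_mul' _ _ ENNReal.ofReal_ne_top,
          lintegral_withDensity_eq_lintegral_mul_non_measurable₀ _ hW hW_fin]
        rfl
    _ ≤ ENNReal.ofReal (C₀ ^ p)
          * (ENNReal.ofReal (2 ^ p * p / (p - 1) * N) * ∫⁻ x, g x ^ p ∂μ) := by
        gcongr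
        exact lintegral_centeredMaximal_rpow_le hτ hN μ hg hp
    _ = _ := by
        rw [lintegral_withDensity_eq_lintegral_mul_non_measurable₀ _ hW hW_fin, ← mul_assoc,
          ← ENNReal.ofReal_mul (by positivity)]
        simp only [Pi.mul_apply, hright]

end Weighted

theorem cube_eq_preimage_closedBall {d : ℕ} (x : EuclideanSpace ℝ (Fin d)) {r : ℝ} (hr : 0 ≤ r) :
    cube x r = WithLp.ofLp ⁻¹' closedBall (WithLp.ofLp x) r := by
  ext y
  simp [cube, mem_closedBall, dist_pi_le_iff hr, Real.dist_eq]

theorem cmaximal_eq_centeredMaximal {d : ℕ} (f : EuclideanSpace ℝ (Fin d) → ℝ)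
    (x : EuclideanSpace ℝ (Fin d)) :
    cmaximal f x = centeredMaximal volume (fun y => ‖f (WithLp.toLp 2 y)‖ₑ) (WithLp.ofLp x) := by
  have hpres := EuclideanSpace.volume_preserving_symm_measurableEquiv_toLp (Fin d)
  have hemb := (MeasurableEquiv.toLp 2 (Fin d → ℝ)).symm.measurableEmbedding
  refine iSup_congr fun r => iSup_congr fun hr => ?_
  rw [cube_eq_preimage_closedBall x hr.le]
  congr 1
  · exact hpres.setLIntegral_comp_preimage_emb hemb (fun y => ‖f (WithLp.toLp 2 y)‖ₑ) _
  · exact hpres.measure_preimage_emb hemb _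

theorem lintegral_cmaximal_rpow_mul_rpow_le {d N : ℕ} {τ : ℝ} (hτ : 1 < τ)
    (hN : IsEmpty (Besicovitch.SatelliteConfig (Fin d → ℝ) N τ))
    {w : EuclideanSpace ℝ (Fin d) → ℝ} (hw0 : 0 ≤ w) (hw : AEMeasurable w) {C₀ : ℝ} (hC₀ : 0 ≤ C₀)
    (hA1 : ∀ x ∈ Function.support w, cmaximal w x ≤ ENNReal.ofReal (C₀ * w x))
    {p : ℝ} (hp : 1 < p) {f : EuclideanSpace ℝ (Fin d) → ℝ} (hf : AEMeasurable f)
    (hfw : Function.support f ⊆ Function.support w) :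
    ∫⁻ x, cmaximal f x ^ p * ENNReal.ofReal (w x ^ (1 - p))
      ≤ ENNReal.ofReal (C₀ ^ p * (2 ^ p * p / (p - 1) * N))
        * ∫⁻ x, ‖f x‖ₑ ^ p * ENNReal.ofReal (w x ^ (1 - p)) := by
  set e := (MeasurableEquiv.toLp 2 (Fin d → ℝ)).symm
  have he := EuclideanSpace.volume_preserving_symm_measurableEquiv_toLp (Fin d)
  have hqmp := (PiLp.volume_preserving_toLp (Fin d)).quasiMeasurePreserving
  have hA1' : ∀ y ∈ Function.support (w ∘ WithLp.toLp 2),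
      centeredMaximal volume (fun z => ENNReal.ofReal (w (WithLp.toLp 2 z))) y
        ≤ ENNReal.ofReal (C₀ * w (WithLp.toLp 2 y)) := fun y hy => by
    simpa only [cmaximal_eq_centeredMaximal, Real.enorm_eq_ofReal (hw0 _)] using hA1 _ hy
  calc ∫⁻ x, cmaximal f x ^ p * ENNReal.ofReal (w x ^ (1 - p))
      = ∫⁻ y, centeredMaximal volume (fun z => ‖f (WithLp.toLp 2 z)‖ₑ) y ^ p
          * ENNReal.ofReal (w (WithLp.toLp 2 y) ^ (1 - p)) := by
        simp only [cmaximal_eq_centeredMaximal]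
        exact he.lintegral_comp_emb e.measurableEmbedding
          (fun y => centeredMaximal volume (fun z => ‖f (WithLp.toLp 2 z)‖ₑ) y ^ p
            * ENNReal.ofReal (w (WithLp.toLp 2 y) ^ (1 - p)))
    _ ≤ ENNReal.ofReal (C₀ ^ p * (2 ^ p * p / (p - 1) * N))
          * ∫⁻ y, ‖f (WithLp.toLp 2 y)‖ₑ ^ p * ENNReal.ofReal (w (WithLp.toLp 2 y) ^ (1 - p)) :=
        lintegral_centeredMaximal_rpow_mul_rpow_le hτ hN volume
          (fun _ _ => measure_closedBall_lt_top.ne) (fun _ => hw0 _)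
          (hw.comp_quasiMeasurePreserving hqmp) hC₀ hA1' hp (hf.comp_quasiMeasurePreserving hqmp)
          fun _ hy => hfw hy
    _ = _ := by
        rw [← he.lintegral_comp_emb e.measurableEmbedding]
        rfl

/-- **Local `A₁` implies the centered maximal operator is bounded on `Lᵖ(w^{1-p})`.**
If `M̃w ≤ C₀ w` everywhere on the support of `w`, then for each `1 < p < ∞` there is a
constant `C` (depending only on `C₀`, `p`, `d`) such that
`∫ (M̃f)^p w^{1-p} ≤ C ∫ |f|^p w^{1-p}` for all `f` supported in `supp w`.
Here `w^{1-p}` is real `rpow`, so `w(x)^{1-p} = 0` whenever `w(x) = 0`. -/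
theorem cmaximal_bounded_on_Lp_dual_weight_of_local_A1
    (d : ℕ) (w : EuclideanSpace ℝ (Fin d) → ℝ)
    (hw0 : 0 ≤ w) (hw : LocallyIntegrable w volume) (C₀ : ℝ)
    (hA1 : ∀ x ∈ Function.support w, cmaximal w x ≤ ENNReal.ofReal (C₀ * w x))
    (p : ℝ) (hp : 1 < p) :
    ∃ C : ℝ, 0 < C ∧
      ∀ f : EuclideanSpace ℝ (Fin d) → ℝ, Measurable f →
        Function.support f ⊆ Function.support w →
        ∫⁻ x, cmaximal f x ^ p * ENNReal.ofReal (w x ^ (1 - p))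
          ≤ ENNReal.ofReal C * ∫⁻ x, (‖f x‖₊ : ℝ≥0∞) ^ p * ENNReal.ofReal (w x ^ (1 - p)) := by
  obtain ⟨N, τ, hτ, hN⟩ := HasBesicovitchCovering.no_satelliteConfig (α := Fin d → ℝ)
  set C₁ := max C₀ 1
  set K := C₁ ^ p * (2 ^ p * p / (p - 1) * N)
  have hC₁ : 0 ≤ C₁ := le_max_of_le_right zero_le_one
  have hK : 0 ≤ K := by bound
  refine ⟨K + 1, by positivity, fun f hf hfw => ?_⟩
  have hA1' : ∀ x ∈ Function.support w, cmaximal w x ≤ ENNReal.ofReal (C₁ * w x) :=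
    fun x hx => (hA1 x hx).trans <|
      ENNReal.ofReal_le_ofReal (mul_le_mul_of_nonneg_right (le_max_left _ _) (hw0 x))
  calc ∫⁻ x, cmaximal f x ^ p * ENNReal.ofReal (w x ^ (1 - p))
      ≤ ENNReal.ofReal K * ∫⁻ x, ‖f x‖ₑ ^ p * ENNReal.ofReal (w x ^ (1 - p)) :=
        lintegral_cmaximal_rpow_mul_rpow_le hτ hN hw0 hw.aestronglyMeasurable.aemeasurable hC₁
          hA1' hp hf.aemeasurable hfw
    _ ≤ _ := mul_le_mul' (ENNReal.ofReal_le_ofReal (by linarith)) le_rfl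
end
end

section
/- For every d ≥ 1 there exist a constant C > 0 and a weight w on ℝ^d satisfying the local A₁ condition Mw(x) ≤ C w(x) for every x in the support of w, such that for every ε > 0 the function w^{1+ε} is not locally integrable on ℝ^d. In particular, weights satisfying the local A₁ condition need not satisfy any reverse Hölder inequality. -/
open MeasureTheory Filter Set Metric
open scoped ENNReal Topology NNReal

noncomputable section

/-!
The weight is `4^(dn)` on a cube `Qₙ` of edge `4⁻ⁿ / (4 (n+1)²)` placed at distance `4⁻ⁿ` from
the origin along a coordinate axis, and `0` elsewhere. Its mass on `Qₙ` is `4⁻ᵈ (n+1)^(-2d)`,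
which is summable, whereas `∫_{Qₙ} w^{1+ε} = 4⁻ᵈ 4^(dnε) / (n+1)^(2d)` is unbounded.
For `x ∈ Q_{n₀}`, a cube `Q ∋ x` either meets only blocks `Qₙ` with `n ≤ n₀`, on which
`w ≤ w(x)`, or it also meets a later block. In the second case its edge is at least
`4^(-n₀) / 2`, because the blocks shrink geometrically towards `0`; hence `|Q| ≥ 2⁻ᵈ / w(x)` and
`‖w‖₁ ≤ 2ᵈ ‖w‖₁ w(x) |Q|`. Either way the average of `w` over `Q` is at most
`(1 + 2ᵈ ‖w‖₁) w(x)`.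
-/

open Function

lemma tendsto_pow_div_succ_pow_atTop {R : ℝ} (hR : 1 < R) (k : ℕ) :
    Tendsto (fun n : ℕ => R ^ n / ((n : ℝ) + 1) ^ k) atTop atTop := by
  have hR0 : 0 < R := zero_lt_one.trans hR
  have hzero : Tendsto (fun n : ℕ => ((n : ℝ) + 1) ^ k / R ^ n) atTop (𝓝 0) := by
    have := ((tendsto_pow_const_div_const_pow_of_one_lt k hR).comp
      (tendsto_add_atTop_nat 1)).const_mul R
    refine (this.congr fun n => ?_).trans (by rw [mul_zero])
    simp only [comp_apply, Nat.cast_succ, pow_succ]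
    field_simp
  have hpos : ∀ n : ℕ, 0 < ((n : ℝ) + 1) ^ k / R ^ n := fun n => by positivity
  exact (tendsto_nhdsWithin_iff.2 ⟨hzero, .of_forall hpos⟩).inv_tendsto_nhdsGT_zero.congr
    fun n => inv_div _ _

section Layered

variable {α : Type*} {Q : ℕ → Set α} {a : ℕ → ℝ≥0∞}

def layered (Q : ℕ → Set α) (a : ℕ → ℝ≥0∞) (x : α) : ℝ≥0∞ :=
  ∑' n, (Q n).indicator (fun _ => a n) x

lemma layered_eq_of_mem (hQ : Pairwise (Disjoint on Q)) {n : ℕ} {x : α} (hx : x ∈ Q n) :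
    layered Q a x = a n := by
  rw [layered, tsum_eq_single n fun m hm => indicator_of_notMem
    (fun hxm => (hQ hm).le_bot ⟨hxm, hx⟩) _, indicator_of_mem hx]

lemma layered_eq_zero {x : α} (hx : ∀ n, x ∉ Q n) : layered Q a x = 0 := by
  simp [layered, indicator_of_notMem (hx _)]

lemma layered_le_add_indicator (hQ : Pairwise (Disjoint on Q)) (ha : Monotone a) (n₀ : ℕ)
    (x : α) : layered Q a x ≤ a n₀ + (⋃ n > n₀, Q n).indicator (layered Q a) x := by
  by_cases hx : ∃ n, x ∈ Q n
  · obtain ⟨n, hxn⟩ := hx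
    rcases le_or_gt n n₀ with hn | hn
    · rw [layered_eq_of_mem hQ hxn]
      exact le_add_right (ha hn)
    · rw [indicator_of_mem (mem_iUnion₂.2 ⟨n, hn, hxn⟩)]
      exact le_add_self
  · rw [layered_eq_zero (not_exists.mp hx)]
    exact zero_le

variable [MeasurableSpace α]

lemma measurable_layered (hQ : ∀ n, MeasurableSet (Q n)) : Measurable (layered Q a) :=
  Measurable.tsum fun n => measurable_const.indicator (hQ n)

lemma lintegral_layered (μ : Measure α) (hQ : ∀ n, MeasurableSet (Q n)) :
    ∫⁻ x, layered Q a x ∂μ = ∑' n, a n * μ (Q n) := by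
  simp only [layered]
  rw [lintegral_tsum fun n => (measurable_const.indicator (hQ n)).aemeasurable]
  simp only [lintegral_indicator_const (hQ _)]

lemma setLIntegral_layered_le (μ : Measure α) (hQ : Pairwise (Disjoint on Q))
    (ha : Monotone a) {S : Set α} (hS : MeasurableSet S)
    (n₀ : ℕ) {κ : ℝ≥0∞} (hκ : (∃ n > n₀, (Q n ∩ S).Nonempty) → 1 ≤ κ * a n₀ * μ S) :
    ∫⁻ x in S, layered Q a x ∂μ ≤ (1 + κ * ∫⁻ x, layered Q a x ∂μ) * a n₀ * μ S := by
  set M := ∫⁻ x, layered Q a x ∂μ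
  have high : ∫⁻ x in S, (⋃ n > n₀, Q n).indicator (layered Q a) x ∂μ ≤ κ * M * (a n₀ * μ S) := by
    by_cases hmeet : ∃ n > n₀, (Q n ∩ S).Nonempty
    · calc ∫⁻ x in S, (⋃ n > n₀, Q n).indicator (layered Q a) x ∂μ
          ≤ ∫⁻ x, (⋃ n > n₀, Q n).indicator (layered Q a) x ∂μ := setLIntegral_le_lintegral _ _
        _ ≤ M := lintegral_mono (indicator_le_self _ _)
        _ ≤ M * (κ * a n₀ * μ S) := le_mul_of_one_le_right' (hκ hmeet)
        _ = κ * M * (a n₀ * μ S) := by ring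
    · push Not at hmeet
      rw [setLIntegral_congr_fun hS (g := 0) fun x hxS => indicator_of_notMem (by
        simp only [mem_iUnion, not_exists]
        exact fun n hn hxn => (hmeet n hn).subset ⟨hxn, hxS⟩) _]
      simp
  calc ∫⁻ x in S, layered Q a x ∂μ
      ≤ ∫⁻ x in S, a n₀ + (⋃ n > n₀, Q n).indicator (layered Q a) x ∂μ :=
        lintegral_mono (layered_le_add_indicator hQ ha n₀)
    _ = a n₀ * μ S + ∫⁻ x in S, (⋃ n > n₀, Q n).indicator (layered Q a) x ∂μ := by
        rw [lintegral_add_left measurable_const, setLIntegral_const]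
    _ ≤ a n₀ * μ S + κ * M * (a n₀ * μ S) := add_le_add_right high _
    _ = (1 + κ * M) * a n₀ * μ S := by ring

end Layered

section Cube

variable {d : ℕ}

lemma cube_eq_toLp_pi (c : EuclideanSpace ℝ (Fin d)) (r : ℝ) :
    cube c r =
      (MeasurableEquiv.toLp 2 (Fin d → ℝ)).symm ⁻¹' univ.pi fun i => Icc (c i - r) (c i + r) := by
  ext x
  simp only [cube, mem_ofPred_eq, mem_preimage, MeasurableEquiv.coe_toLp_symm, mem_univ_pi, mem_Icc,
    abs_le]
  exact forall_congr' fun i => by constructor <;> intro h <;> constructor <;> linarith [h.1, h.2]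

lemma measurableSet_cube (c : EuclideanSpace ℝ (Fin d)) (r : ℝ) : MeasurableSet (cube c r) := by
  rw [cube_eq_toLp_pi]
  exact (MeasurableEquiv.measurable _) (MeasurableSet.univ_pi fun _ => measurableSet_Icc)

lemma isCompact_cube (c : EuclideanSpace ℝ (Fin d)) (r : ℝ) : IsCompact (cube c r) := by
  rw [cube_eq_toLp_pi, ← MeasurableEquiv.image_eq_preimage_symm]
  exact (isCompact_univ_pi fun _ => isCompact_Icc).image (PiLp.continuous_toLp 2 _)

lemma volume_cube (c : EuclideanSpace ℝ (Fin d)) {r : ℝ} (hr : 0 ≤ r) :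
    volume (cube c r) = ENNReal.ofReal ((2 * r) ^ d) := by
  rw [cube_eq_toLp_pi,
    (EuclideanSpace.volume_preserving_symm_measurableEquiv_toLp (Fin d)).measure_preimage
      (MeasurableSet.univ_pi fun _ => measurableSet_Icc).nullMeasurableSet, volume_pi_pi]
  simp only [Real.volume_Icc, show ∀ i, c i + r - (c i - r) = 2 * r from fun _ => by ring,
    Finset.prod_const, Finset.card_univ, Fintype.card_fin,
    ENNReal.ofReal_pow (by positivity : 0 ≤ 2 * r)]

lemma maximal_le_of_forall_setLIntegral_le {f : EuclideanSpace ℝ (Fin d) → ℝ}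
    {x : EuclideanSpace ℝ (Fin d)} {K : ℝ≥0∞}
    (h : ∀ c r, 0 < r → x ∈ cube c r → ∫⁻ y in cube c r, ‖f y‖ₑ ≤ K * volume (cube c r)) :
    maximal f x ≤ K := by
  simp only [maximal, ← enorm_eq_nnnorm]
  exact iSup₂_le fun c r => iSup₂_le fun hr hx => ENNReal.div_le_of_le_mul (h c r hr hx)

end Cube

namespace LocalA1

variable {d : ℕ} (i : Fin d)

def scale (n : ℕ) : ℝ := 4⁻¹ ^ n

def radius (n : ℕ) : ℝ := scale n / (8 * (n + 1) ^ 2)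

def block (n : ℕ) : Set (EuclideanSpace ℝ (Fin d)) :=
  cube (EuclideanSpace.single i (scale n)) (radius n)

def height (d n : ℕ) : ℝ≥0∞ := ENNReal.ofReal (4 ^ (d * n))

lemma scale_pos (n : ℕ) : 0 < scale n := by unfold scale; positivity

lemma scale_le_one (n : ℕ) : scale n ≤ 1 := pow_le_one₀ (by norm_num) (by norm_num)

lemma scale_le_quarter {n m : ℕ} (h : n < m) : scale m ≤ scale n / 4 :=
  calc scale m ≤ scale (n + 1) := pow_le_pow_of_le_one (by norm_num) (by norm_num) h
    _ = scale n / 4 := by rw [scale, scale, pow_succ]; ring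

lemma radius_pos (n : ℕ) : 0 < radius n := by have := scale_pos n; unfold radius; positivity

lemma radius_le (n : ℕ) : radius n ≤ scale n / 8 :=
  div_le_div_of_nonneg_left (scale_pos n).le (by norm_num)
    (le_mul_of_one_le_right (by norm_num) (one_le_pow₀ (by linarith [n.cast_nonneg (α := ℝ)])))

variable {i}

lemma coord_mem_Icc_of_mem_block {n : ℕ} {x : EuclideanSpace ℝ (Fin d)} (hx : x ∈ block i n) :
    x i ∈ Icc (7 / 8 * scale n) (9 / 8 * scale n) := by
  have h := abs_le.1 (hx i)
  simp only [PiLp.single_apply, if_pos] at h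
  constructor <;> linarith [radius_le n]

lemma scale_le_of_mem_cube {n₀ n : ℕ} (hn : n₀ < n) {x y c : EuclideanSpace ℝ (Fin d)} {r : ℝ}
    (hx : x ∈ block i n₀) (hy : y ∈ block i n) (hxc : x ∈ cube c r) (hyc : y ∈ cube c r) :
    scale n₀ ≤ 4 * r := by
  have hxi := coord_mem_Icc_of_mem_block hx
  have hyi := coord_mem_Icc_of_mem_block hy
  have hxc := abs_le.1 (hxc i)
  have hyc := abs_le.1 (hyc i)
  linarith [hxi.1, hyi.2, scale_le_quarter hn]

variable (i)

lemma pairwise_disjoint_block : Pairwise (Disjoint on block i) := by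
  intro n m hnm
  wlog h : n < m generalizing n m
  · exact (this hnm.symm (lt_of_le_of_ne (not_lt.1 h) hnm.symm)).symm
  refine Set.disjoint_left.2 fun x hxn hxm => ?_
  have := scale_le_of_mem_cube h hxn hxm hxm hxm
  linarith [radius_le m, scale_le_quarter h, scale_pos n]

lemma measurableSet_block (n : ℕ) : MeasurableSet (block i n) := measurableSet_cube _ _

lemma block_subset_cube (n : ℕ) : block i n ⊆ cube 0 2 := by
  intro x hx j
  have hc : |EuclideanSpace.single i (scale n) j| ≤ 1 := by
    rw [PiLp.single_apply]
    split_ifs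
    · rw [abs_of_pos (scale_pos n)]; exact scale_le_one n
    · simp
  calc |x j - (0 : EuclideanSpace ℝ (Fin d)) j|
      ≤ |x j - EuclideanSpace.single i (scale n) j| + |EuclideanSpace.single i (scale n) j| := by
        simpa using abs_sub_le (x j) (EuclideanSpace.single i (scale n) j) 0
    _ ≤ 2 := by linarith [hx j, radius_le n, scale_le_one n]

lemma monotone_height : Monotone (height d) := fun _ _ h =>
  ENNReal.ofReal_le_ofReal (pow_le_pow_right₀ (by norm_num) (Nat.mul_le_mul_left d h))

lemma four_pow_mul_scale_pow (n : ℕ) : (4 : ℝ) ^ (d * n) * scale n ^ d = 1 := by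
  rw [scale, ← pow_mul, mul_comm n, ← mul_pow]; norm_num

lemma four_pow_mul_edge_pow (n : ℕ) :
    (4 : ℝ) ^ (d * n) * (2 * radius n) ^ d = 1 / (4 ^ d * (n + 1) ^ (2 * d)) := by
  have h : 2 * radius n = scale n / (4 * (n + 1) ^ 2) := by rw [radius]; field_simp; ring
  rw [h, div_pow, ← mul_div_assoc, four_pow_mul_scale_pow, mul_pow, ← pow_mul, mul_comm 2 d]

lemma height_mul_volume_block (n : ℕ) :
    height d n * volume (block i n) = ENNReal.ofReal (1 / (4 ^ d * (n + 1) ^ (2 * d))) := by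
  rw [height, block, volume_cube _ (radius_pos n).le, ← ENNReal.ofReal_mul (by positivity),
    four_pow_mul_edge_pow]

lemma lintegral_layered_block_ne_top : ∫⁻ x, layered (block i) (height d) x ≠ ⊤ := by
  have hd : 1 < 2 * d := by have := i.pos; omega
  have hsum : Summable fun n : ℕ => 1 / ((4 : ℝ) ^ d * (n + 1) ^ (2 * d)) := by
    have := ((summable_nat_add_iff 1).2 (Real.summable_one_div_nat_pow.2 hd)).mul_left (1 / 4 ^ d)
    simpa [div_eq_mul_inv, mul_comm] using this
  rw [lintegral_layered _ (measurableSet_block i), funext (height_mul_volume_block i),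
    ← ENNReal.ofReal_tsum_of_nonneg (fun _ => by positivity) hsum]
  exact ENNReal.ofReal_ne_top

def weight (x : EuclideanSpace ℝ (Fin d)) : ℝ := (layered (block i) (height d) x).toReal

lemma layered_block_ne_top (x : EuclideanSpace ℝ (Fin d)) : layered (block i) (height d) x ≠ ⊤ := by
  by_cases hx : ∃ n, x ∈ block i n
  · obtain ⟨n, hn⟩ := hx
    rw [layered_eq_of_mem (pairwise_disjoint_block i) hn]
    exact ENNReal.ofReal_ne_top
  · rw [layered_eq_zero (not_exists.1 hx)]
    exact ENNReal.zero_ne_top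

lemma enorm_weight (x : EuclideanSpace ℝ (Fin d)) :
    ‖weight i x‖ₑ = layered (block i) (height d) x := by
  rw [weight, Real.enorm_eq_ofReal ENNReal.toReal_nonneg,
    ENNReal.ofReal_toReal (layered_block_ne_top i x)]

lemma weight_nonneg : 0 ≤ weight i := fun _ => ENNReal.toReal_nonneg

lemma weight_eq_of_mem {n : ℕ} {x : EuclideanSpace ℝ (Fin d)} (hx : x ∈ block i n) :
    weight i x = 4 ^ (d * n) := by
  rw [weight, layered_eq_of_mem (pairwise_disjoint_block i) hx, height,
    ENNReal.toReal_ofReal (by positivity)]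

lemma exists_mem_block_of_mem_support {x : EuclideanSpace ℝ (Fin d)}
    (hx : x ∈ Function.support (weight i)) :
    ∃ n, x ∈ block i n := by
  by_contra h
  exact hx (by rw [weight, layered_eq_zero (not_exists.1 h), ENNReal.toReal_zero])

lemma integrable_weight : Integrable (weight i) :=
  integrable_toReal_of_lintegral_ne_top
    (measurable_layered (measurableSet_block i)).aemeasurable (lintegral_layered_block_ne_top i)

lemma maximal_weight_le {x : EuclideanSpace ℝ (Fin d)} (hx : x ∈ Function.support (weight i)) :
    maximal (weight i) x ≤ ENNReal.ofReal
      ((1 + 2 ^ d * (∫⁻ y, layered (block i) (height d) y).toReal) * weight i x) := by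
  obtain ⟨n₀, hn₀⟩ := exists_mem_block_of_mem_support i hx
  set M := ∫⁻ y, layered (block i) (height d) y
  have hconst : ENNReal.ofReal ((1 + 2 ^ d * M.toReal) * weight i x)
      = (1 + 2 ^ d * M) * height d n₀ := by
    rw [weight_eq_of_mem i hn₀, height, ENNReal.ofReal_mul (by positivity),
      ENNReal.ofReal_add zero_le_one (by positivity), ENNReal.ofReal_mul (by positivity),
      ENNReal.ofReal_toReal (lintegral_layered_block_ne_top i), ENNReal.ofReal_one,
      ENNReal.ofReal_pow zero_le_two, ENNReal.ofReal_ofNat]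
  rw [hconst]
  refine maximal_le_of_forall_setLIntegral_le fun c r hr hxc => ?_
  simp only [enorm_weight]
  refine setLIntegral_layered_le _ (pairwise_disjoint_block i) monotone_height
    (measurableSet_cube c r) n₀ ?_
  rintro ⟨n, hn, y, hyn, hyc⟩
  have hedge : scale n₀ / 2 ≤ 2 * r := by linarith [scale_le_of_mem_cube hn hn₀ hyn hxc hyc]
  calc (1 : ℝ≥0∞) = ENNReal.ofReal (2 ^ d * 4 ^ (d * n₀) * (scale n₀ / 2) ^ d) := by
        rw [mul_comm (2 ^ d : ℝ), mul_assoc, ← mul_pow, mul_div_cancel₀ _ two_ne_zero,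
          four_pow_mul_scale_pow, ENNReal.ofReal_one]
    _ ≤ 2 ^ d * height d n₀ * volume (cube c r) := by
        rw [volume_cube c hr.le, height, ENNReal.ofReal_mul (by positivity),
          ENNReal.ofReal_mul (by positivity), ENNReal.ofReal_pow zero_le_two, ENNReal.ofReal_ofNat]
        gcongr
        linarith [scale_pos n₀]

lemma four_pow_rpow_one_add (n : ℕ) (ε : ℝ) :
    ((4 : ℝ) ^ (d * n)) ^ (1 + ε) = (4 ^ (d * ε)) ^ n * 4 ^ (d * n) := by
  rw [Real.rpow_add (by positivity), Real.rpow_one, ← Real.rpow_natCast (4 : ℝ) (d * n),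
    ← Real.rpow_natCast _ n, ← Real.rpow_mul (by norm_num), ← Real.rpow_mul (by norm_num)]
  push_cast
  ring_nf

lemma setIntegral_weight_rpow_block (ε : ℝ) (n : ℕ) :
    ∫ x in block i n, weight i x ^ (1 + ε)
      = (4 ^ (d * ε)) ^ n / ((n : ℝ) + 1) ^ (2 * d) / 4 ^ d := by
  rw [setIntegral_congr_fun (measurableSet_block i n) fun x hx => by rw [weight_eq_of_mem i hx],
    setIntegral_const, smul_eq_mul, measureReal_def, block, volume_cube _ (radius_pos n).le,
    ENNReal.toReal_ofReal (by have := radius_pos n; positivity), four_pow_rpow_one_add, mul_comm,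
    mul_assoc, four_pow_mul_edge_pow]
  field_simp

lemma not_locallyIntegrable_weight_rpow {ε : ℝ} (hε : 0 < ε) :
    ¬ LocallyIntegrable (fun x => weight i x ^ (1 + ε)) volume := by
  intro h
  set B := ∫ x in cube 0 2, weight i x ^ (1 + ε)
  have hbound (n : ℕ) : ∫ x in block i n, weight i x ^ (1 + ε) ≤ B :=
    setIntegral_mono_set (h.integrableOn_isCompact (isCompact_cube 0 2))
      (.of_forall fun x => Real.rpow_nonneg (weight_nonneg i x) _)
      (block_subset_cube i n).eventuallyLE
  have hR : 1 < (4 : ℝ) ^ (d * ε) :=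
    Real.one_lt_rpow (by norm_num) (mul_pos (Nat.cast_pos.2 i.pos) hε)
  obtain ⟨n, hn⟩ := (((tendsto_pow_div_succ_pow_atTop hR (2 * d)).atTop_div_const
    (by positivity : (0 : ℝ) < 4 ^ d)).eventually_gt_atTop B).exists
  linarith [hbound n, setIntegral_weight_rpow_block i ε n]

end LocalA1

/-- **No reverse Hölder inequality for local `A₁` weights.** In each dimension `d ≥ 1`
there are a constant `C > 0` and a weight `w` with `Mw ≤ C w` everywhere on the
support of `w`, such that for every `ε > 0` the function `w^{1+ε}` is not locally
integrable. -/
theorem local_A1_weight_without_reverse_holder (d : ℕ) (hd : 1 ≤ d) :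
    ∃ (C : ℝ) (w : EuclideanSpace ℝ (Fin d) → ℝ),
      0 < C ∧ 0 ≤ w ∧ LocallyIntegrable w volume ∧
      (∀ x ∈ Function.support w, maximal w x ≤ ENNReal.ofReal (C * w x)) ∧
      ∀ ε : ℝ, 0 < ε →
        ¬ LocallyIntegrable (fun x => w x ^ (1 + ε)) volume := by
  let i : Fin d := ⟨0, hd⟩
  exact ⟨_, LocalA1.weight i, by positivity, LocalA1.weight_nonneg i,
    (LocalA1.integrable_weight i).locallyIntegrable, fun x => LocalA1.maximal_weight_le i,
    fun ε => LocalA1.not_locallyIntegrable_weight_rpow i⟩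
end
end
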